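/- arXiv:1207.2721 — 3 statements merged into one kernel-verified Lean document; each statement's English description precedes it below -/
import Mathlib

section
/- Let N ≥ 1, let D ⊆ ℂ^N be a bounded convex domain, let G : D × [0,∞) → ℂ^N be a Herglotz vector field of order d ∈ [1,∞] on D, and let (f_t : D → ℂ^N)_{t≥0} be a solution of the Loewner PDE for G. Then the family (f_t) is of order d: for every compact K ⊆ D and every T > 0 there exists c ∈ L^d([0,T],ℝ≥0) such that ‖f_s(z) − f_t(z)‖ ≤ ∫_s^t c(ξ)dξ for all z ∈ K and 0 ≤ s ≤ t ≤ T. -/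
open MeasureTheory Set Metric Filter
open scoped ENNReal

noncomputable section

/-- `ℂ^N` with the Euclidean norm. -/
abbrev ℂN (N : ℕ) := EuclideanSpace ℂ (Fin N)

variable {N : ℕ}

/-- A domain: a nonempty open connected set. -/
def IsDomainSet (D : Set (ℂN N)) : Prop := IsOpen D ∧ IsConnected D

/-- A holomorphic vector field `H` on `D` is semicomplete if every Cauchy problem
`x'(s) = H(x(s))`, `x(0) = z₀` with `z₀ ∈ D` has a solution defined on all of `[0,∞)`
with values in `D`. -/
def Semicomplete (H : ℂN N → ℂN N) (D : Set (ℂN N)) : Prop :=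
  ∀ z₀ ∈ D, ∃ x : ℝ → ℂN N, x 0 = z₀ ∧ (∀ s : ℝ, 0 ≤ s → x s ∈ D) ∧
    ∀ s : ℝ, 0 ≤ s → HasDerivAt x (H (x s)) s

/-- A Herglotz vector field of order `d` on a domain `D ⊆ ℂ^N`. -/
structure IsHerglotzVectorField (G : ℂN N → ℝ → ℂN N) (D : Set (ℂN N)) (d : ℝ≥0∞) :
    Prop where
  measurable_t : ∀ z ∈ D, StronglyMeasurable fun t : ℝ => G z t
  holomorphic : ∀ t : ℝ, 0 ≤ t → DifferentiableOn ℂ (fun z => G z t) D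
  lp_bound : ∀ K : Set (ℂN N), K ⊆ D → IsCompact K → ∀ T : ℝ, 0 < T →
    ∃ C : ℝ → ℝ, (∀ t, 0 ≤ C t) ∧ MemLp C d (volume.restrict (Icc (0:ℝ) T)) ∧
      ∀ᵐ t ∂(volume.restrict (Icc (0:ℝ) T)), ∀ z ∈ K, ‖G z t‖ ≤ C t
  semicomplete : ∀ᵐ t ∂(volume.restrict (Ici (0:ℝ))), Semicomplete (fun z => G z t) D

/-- `t ↦ f t` is absolutely continuous on `[0,T]`. -/
def AbsContOnIcc (f : ℝ → ℂN N) (T : ℝ) : Prop :=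
  ∀ ε : ℝ, 0 < ε → ∃ δ : ℝ, 0 < δ ∧ ∀ n : ℕ, ∀ a b : Fin n → ℝ,
    (∀ i, a i ∈ Icc (0:ℝ) T) → (∀ i, b i ∈ Icc (0:ℝ) T) → (∀ i, a i ≤ b i) →
    (∀ i j, i ≠ j → Disjoint (Ioo (a i) (b i)) (Ioo (a j) (b j))) →
    (∑ i, (b i - a i)) < δ → (∑ i, ‖f (b i) - f (a i)‖) < ε

/-- A solution `(f_t)_{t ≥ 0}` of the Loewner PDE `∂f_t(z)/∂t = -df_t(z)·G(z,t)` on `D`. -/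
structure IsLoewnerSolution (f : ℝ → ℂN N → ℂN N) (G : ℂN N → ℝ → ℂN N)
    (D : Set (ℂN N)) : Prop where
  holomorphic : ∀ t : ℝ, 0 ≤ t → DifferentiableOn ℂ (f t) D
  continuous_t : ∀ K : Set (ℂN N), K ⊆ D → IsCompact K → ∀ t₀ : ℝ, 0 ≤ t₀ →
    ∀ ε : ℝ, 0 < ε → ∃ δ : ℝ, 0 < δ ∧ ∀ t : ℝ, 0 ≤ t → |t - t₀| < δ →
      ∀ z ∈ K, ‖f t z - f t₀ z‖ < ε
  locAbsCont : ∀ z ∈ D, ∀ T : ℝ, 0 < T → AbsContOnIcc (fun t => f t z) T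
  pde : ∀ z ∈ D, ∀ᵐ t ∂(volume.restrict (Ici (0:ℝ))),
    HasDerivAt (fun s : ℝ => f s z) (-(fderiv ℂ (f t) z (G z t))) t

/-- An evolution family of order `d` on `D`. -/
structure IsEvolutionFamily (φ : ℝ → ℝ → ℂN N → ℂN N) (D : Set (ℂN N)) (d : ℝ≥0∞) :
    Prop where
  mapsTo : ∀ s t : ℝ, 0 ≤ s → s ≤ t → MapsTo (φ s t) D D
  holomorphic : ∀ s t : ℝ, 0 ≤ s → s ≤ t → DifferentiableOn ℂ (φ s t) D
  id_eq : ∀ s : ℝ, 0 ≤ s → ∀ z ∈ D, φ s s z = z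
  comp : ∀ s u t : ℝ, 0 ≤ s → s ≤ u → u ≤ t → ∀ z ∈ D, φ s t z = φ u t (φ s u z)
  lp_bound : ∀ T : ℝ, 0 < T → ∀ K : Set (ℂN N), K ⊆ D → IsCompact K →
    ∃ c : ℝ → ℝ, (∀ ξ, 0 ≤ c ξ) ∧ MemLp c d (volume.restrict (Icc (0:ℝ) T)) ∧
      ∀ z ∈ K, ∀ s u t : ℝ, 0 ≤ s → s ≤ u → u ≤ t → t ≤ T →
        ‖φ s t z - φ s u z‖ ≤ ∫ ξ in u..t, c ξ

/-- The family `(φ_{s,t})` solves the Loewner ODE `∂φ_{s,t}(z)/∂t = G(φ_{s,t}(z),t)`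
for all `z ∈ D`, all `s ≥ 0` and a.e. `t ∈ [s,∞)`. -/
def SolvesLoewnerODE (φ : ℝ → ℝ → ℂN N → ℂN N) (G : ℂN N → ℝ → ℂN N)
    (D : Set (ℂN N)) : Prop :=
  ∀ z ∈ D, ∀ s : ℝ, 0 ≤ s → ∀ᵐ t ∂(volume.restrict (Ici s)),
    HasDerivAt (fun r : ℝ => φ s r z) (G (φ s t z) t) t

/-- The family `(f_t)` is of order `d` on `D`. -/
def IsOrderD (f : ℝ → ℂN N → ℂN N) (D : Set (ℂN N)) (d : ℝ≥0∞) : Prop :=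
  ∀ K : Set (ℂN N), K ⊆ D → IsCompact K → ∀ T : ℝ, 0 < T →
    ∃ c : ℝ → ℝ, (∀ ξ, 0 ≤ c ξ) ∧ MemLp c d (volume.restrict (Icc (0:ℝ) T)) ∧
      ∀ z ∈ K, ∀ s t : ℝ, 0 ≤ s → s ≤ t → t ≤ T →
        ‖f s z - f t z‖ ≤ ∫ ξ in s..t, c ξ

/-- `(U, V)` is a Runge pair: every function holomorphic on `U` is approximable, uniformly on
compact subsets of `U`, by functions holomorphic on `V`. -/
def IsRungePair (U V : Set (ℂN N)) : Prop :=
  ∀ f : ℂN N → ℂ, DifferentiableOn ℂ f U →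
    ∀ K : Set (ℂN N), K ⊆ U → IsCompact K → ∀ ε : ℝ, 0 < ε →
      ∃ g : ℂN N → ℂ, DifferentiableOn ℂ g V ∧ ∀ z ∈ K, ‖f z - g z‖ < ε

/-- A Runge domain of `ℂ^N`. -/
def IsRungeDomain (U : Set (ℂN N)) : Prop := IsRungePair U univ

/-- A holomorphic automorphism of `ℂ^N`. -/
def IsHolomorphicAutomorphism (α : ℂN N → ℂN N) : Prop :=
  Differentiable ℂ α ∧ ∃ β : ℂN N → ℂN N, Differentiable ℂ β ∧
    Function.LeftInverse β α ∧ Function.RightInverse β α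

/-- A starlike domain: a domain which is star-shaped with respect to one of its points. -/
def IsStarlikeDomain (U : Set (ℂN N)) : Prop :=
  IsDomainSet U ∧ ∃ p ∈ U, ∀ z ∈ U, ∀ t : ℝ, t ∈ Icc (0:ℝ) 1 → p + t • (z - p) ∈ U

/-- A starshapelike domain: the image of `U` under some holomorphic automorphism of `ℂ^N`
is starlike. -/
def IsStarshapelike (U : Set (ℂN N)) : Prop :=
  IsDomainSet U ∧ ∃ α : ℂN N → ℂN N, IsHolomorphicAutomorphism α ∧
    IsStarlikeDomain (α '' U)

/-!
Let `K_r ⊆ D` be a closed `r`-neighbourhood of `K`. The map `(t, z) ↦ f_t(z)` is jointly continuous,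
hence bounded by some `M` on `[0, T] × K_r`, and the Cauchy estimate gives `‖df_t(z)‖ ≤ 2M/r` for
`z ∈ K`. By the Loewner PDE, `‖∂f_t(z)/∂t‖ ≤ (2M/r) C(t)` for a.e. `t`, where `C ∈ L^d` bounds `G`
on `K`; since `t ↦ f_t(z)` is absolutely continuous, the fundamental theorem of calculus gives the
estimate with `c = (2M/r) C`.
-/

theorem LipschitzWith.comp_absolutelyContinuousOnInterval {X Y : Type*} [PseudoMetricSpace X]
    [PseudoMetricSpace Y] {φ : X → Y} {K : NNReal} (hφ : LipschitzWith K φ) {g : ℝ → X}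
    {a b : ℝ} (hg : AbsolutelyContinuousOnInterval g a b) :
    AbsolutelyContinuousOnInterval (φ ∘ g) a b := by
  have hK := Tendsto.const_mul (K : ℝ) hg
  rw [mul_zero] at hK
  refine squeeze_zero (fun E => Finset.sum_nonneg fun i _ => dist_nonneg) (fun E => ?_) hK
  rw [Finset.mul_sum]
  exact Finset.sum_le_sum fun i _ => hφ.dist_le_mul _ _

theorem AbsolutelyContinuousOnInterval.norm_sub_le_integral {E : Type*} [NormedAddCommGroup E]
    [NormedSpace ℝ E] {g v : ℝ → E} {c : ℝ → ℝ} {a b : ℝ} (hab : a ≤ b)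
    (hg : AbsolutelyContinuousOnInterval g a b) (hc : IntervalIntegrable c volume a b)
    (hgc : ∀ᵐ x ∂volume.restrict (Icc a b), HasDerivAt g (v x) x ∧ ‖v x‖ ≤ c x) :
    ‖g b - g a‖ ≤ ∫ x in a..b, c x := by
  obtain ⟨ℓ, hℓ, hℓg⟩ := exists_dual_vector'' ℝ (g b - g a)
  have hℓg_ac : AbsolutelyContinuousOnInterval (ℓ ∘ g) a b :=
    ℓ.lipschitz.comp_absolutelyContinuousOnInterval hg
  calc ‖g b - g a‖ = (ℓ ∘ g) b - (ℓ ∘ g) a := by simpa using hℓg.symm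
    _ = ∫ x in a..b, deriv (ℓ ∘ g) x := hℓg_ac.integral_deriv_eq_sub.symm
    _ ≤ ∫ x in a..b, c x := by
      refine intervalIntegral.integral_mono_ae_restrict hab hℓg_ac.intervalIntegrable_deriv hc ?_
      filter_upwards [hgc] with x ⟨hgx, hvx⟩
      rw [(ℓ.hasFDerivAt.comp_hasDerivAt x hgx).deriv]
      calc ℓ (v x) ≤ ‖ℓ‖ * ‖v x‖ := (Real.le_norm_self _).trans (ℓ.le_opNorm _)
        _ ≤ c x := (mul_le_of_le_one_left (norm_nonneg _) hℓ).trans hvx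

theorem AbsContOnIcc.absolutelyContinuousOnInterval {g : ℝ → ℂN N} {T : ℝ} (hT : 0 ≤ T)
    (hg : AbsContOnIcc g T) : AbsolutelyContinuousOnInterval g 0 T := by
  rw [absolutelyContinuousOnInterval_iff]
  intro ε hε
  obtain ⟨δ, hδ, hgδ⟩ := hg ε hε
  refine ⟨δ, hδ, fun ⟨n, I⟩ ⟨hmem, hdisj⟩ hlen => ?_⟩
  -- `disjWithin` allows `(I i).2 < (I i).1`, so the endpoints are sorted first.
  set a : Fin n → ℝ := fun i => min (I i).1 (I i).2
  set b : Fin n → ℝ := fun i => max (I i).1 (I i).2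
  rw [uIcc_of_le hT] at hmem
  have hlen' : ∑ i, (b i - a i) = ∑ i ∈ Finset.range n, dist (I i).1 (I i).2 := by
    rw [← Fin.sum_univ_eq_sum_range (fun i => dist (I i).1 (I i).2)]
    simp [a, b, max_sub_min_eq_abs, Real.dist_eq, abs_sub_comm]
  have hsum : ∑ i, ‖g (b i) - g (a i)‖ =
      ∑ i ∈ Finset.range n, dist (g (I i).1) (g (I i).2) := by
    rw [← Fin.sum_univ_eq_sum_range (fun i => dist (g (I i).1) (g (I i).2))]
    refine Finset.sum_congr rfl fun i _ => ?_
    rcases le_total (I i).1 (I i).2 with h | h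
    · simp [a, b, h, dist_eq_norm']
    · simp [a, b, h, dist_eq_norm]
  have hI : ∀ i : Fin n, (I i).1 ∈ Icc 0 T ∧ (I i).2 ∈ Icc 0 T :=
    fun i => hmem i (Finset.mem_range.2 i.2)
  rw [← hsum]
  refine hgδ n a b (fun i => ?_) (fun i => ?_) (fun i => min_le_max) (fun i j hij => ?_)
    (hlen'.trans_lt hlen)
  · exact ⟨le_min (hI i).1.1 (hI i).2.1, min_le_of_left_le (hI i).1.2⟩
  · exact ⟨le_max_of_le_left (hI i).1.1, max_le (hI i).1.2 (hI i).2.2⟩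
  · exact Disjoint.mono Ioo_subset_Ioc_self Ioo_subset_Ioc_self
      (hdisj (Finset.mem_range.2 i.2) (Finset.mem_range.2 j.2) (Fin.val_injective.ne hij))

theorem norm_fderiv_le_of_forall_norm_le {E F : Type*} [NormedAddCommGroup E] [NormedSpace ℂ E]
    [NormedAddCommGroup F] [NormedSpace ℂ F] {g : E → F} {z : E} {r M : ℝ}
    (hg : DifferentiableOn ℂ g (ball z r)) (hr : 0 < r) (hM : ∀ w ∈ ball z r, ‖g w‖ ≤ M) :
    ‖fderiv ℂ g z‖ ≤ 2 * M / r := by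
  refine Complex.norm_fderiv_le_div_of_mapsTo_ball hg (fun w hw => ?_) hr
  rw [mem_closedBall, dist_eq_norm]
  linarith [norm_sub_le (g w) (g z), hM w hw, hM z (mem_ball_self hr)]

namespace IsLoewnerSolution

variable {f : ℝ → ℂN N → ℂN N} {G : ℂN N → ℝ → ℂN N} {D K : Set (ℂN N)}

theorem continuousOn_uncurry (hf : IsLoewnerSolution f G D) (hKD : K ⊆ D) (hK : IsCompact K) :
    ContinuousOn (Function.uncurry f) (Ici 0 ×ˢ K) := by
  rintro ⟨t₀, z₀⟩ ⟨ht₀, hz₀⟩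
  rw [Metric.continuousWithinAt_iff]
  intro ε hε
  obtain ⟨δ₁, hδ₁, hδ₁f⟩ := hf.continuous_t K hKD hK t₀ ht₀ (ε / 2) (half_pos hε)
  obtain ⟨δ₂, hδ₂, hδ₂f⟩ := Metric.continuousWithinAt_iff.1
    ((hf.holomorphic t₀ ht₀).continuousOn.mono hKD z₀ hz₀) (ε / 2) (half_pos hε)
  refine ⟨min δ₁ δ₂, lt_min hδ₁ hδ₂, fun ⟨t, z⟩ ⟨ht, hz⟩ hdist => ?_⟩
  rw [Prod.dist_eq, max_lt_iff, lt_min_iff, lt_min_iff] at hdist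
  have hδ₁' : ‖f t z - f t₀ z‖ < ε / 2 := hδ₁f t ht hdist.1.1 z hz
  calc dist (f t z) (f t₀ z₀) ≤ dist (f t z) (f t₀ z) + dist (f t₀ z) (f t₀ z₀) :=
        dist_triangle _ _ _
    _ < ε / 2 + ε / 2 := add_lt_add (by rwa [dist_eq_norm]) (hδ₂f hz hdist.2.2)
    _ = ε := add_halves ε

theorem exists_bound (hf : IsLoewnerSolution f G D) (hKD : K ⊆ D) (hK : IsCompact K) (T : ℝ) :
    ∃ M, 0 ≤ M ∧ ∀ t ∈ Icc 0 T, ∀ z ∈ K, ‖f t z‖ ≤ M := by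
  obtain ⟨M, hM⟩ := (isCompact_Icc.prod hK).exists_bound_of_continuousOn
    ((hf.continuousOn_uncurry hKD hK).mono (prod_mono Icc_subset_Ici_self subset_rfl))
  exact ⟨max M 0, le_max_right _ _, fun t ht z hz => (hM (t, z) ⟨ht, hz⟩).trans (le_max_left _ _)⟩

theorem ae_hasDerivAt_norm_le (hf : IsLoewnerSolution f G D) {z : ℂN N} {r M T : ℝ}
    {C : ℝ → ℝ} (hr : 0 < r) (hzD : ball z r ⊆ D)
    (hM : ∀ t ∈ Icc 0 T, ∀ w ∈ ball z r, ‖f t w‖ ≤ M)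
    (hC : ∀ᵐ t ∂volume.restrict (Icc 0 T), ‖G z t‖ ≤ C t) :
    ∀ᵐ t ∂volume.restrict (Icc 0 T),
      HasDerivAt (fun s => f s z) (-(fderiv ℂ (f t) z (G z t))) t ∧
        ‖-(fderiv ℂ (f t) z (G z t))‖ ≤ 2 * M / r * C t := by
  filter_upwards [ae_restrict_of_ae_restrict_of_subset Icc_subset_Ici_self
    (hf.pde z (hzD (mem_ball_self hr))), hC, ae_restrict_mem measurableSet_Icc]
    with t hpde hCt ht
  refine ⟨hpde, ?_⟩
  have hdf : ‖fderiv ℂ (f t) z‖ ≤ 2 * M / r :=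
    norm_fderiv_le_of_forall_norm_le ((hf.holomorphic t ht.1).mono hzD) hr (hM t ht)
  rw [norm_neg]
  exact (ContinuousLinearMap.le_opNorm _ _).trans
    (mul_le_mul hdf hCt (norm_nonneg _) ((norm_nonneg _).trans hdf))

end IsLoewnerSolution

theorem loewner_solution_is_order_d_general
    (N : ℕ) (D : Set (ℂN N)) (hD : IsDomainSet D)
    (d : ℝ≥0∞) (hd : 1 ≤ d) (G : ℂN N → ℝ → ℂN N)
    (hG : IsHerglotzVectorField G D d)
    (f : ℝ → ℂN N → ℂN N) (hf : IsLoewnerSolution f G D) :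
    IsOrderD f D d := by
  intro K hKD hK T hT
  obtain ⟨r, hr, hKrD⟩ := hK.exists_cthickening_subset_open hD.1 hKD
  obtain ⟨M, hM0, hM⟩ := hf.exists_bound hKrD hK.cthickening T
  obtain ⟨C, hC0, hCd, hGC⟩ := hG.lp_bound K hKD hK T hT
  refine ⟨fun ξ => 2 * M / r * C ξ, fun ξ => by have := hC0 ξ; positivity, hCd.const_mul _, ?_⟩
  intro z hz s t hs hst htT
  have hball : ball z r ⊆ cthickening r K :=
    ball_subset_closedBall.trans (closedBall_subset_cthickening hz r)
  have hderiv := hf.ae_hasDerivAt_norm_le hr (hball.trans hKrD)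
    (fun t ht w hw => hM t ht w (hball hw)) (hGC.mono fun t ht => ht z hz)
  have hst_sub : Icc s t ⊆ Icc 0 T := Icc_subset_Icc hs htT
  rw [norm_sub_rev]
  refine AbsolutelyContinuousOnInterval.norm_sub_le_integral hst ?_ ?_
    (ae_restrict_of_ae_restrict_of_subset hst_sub hderiv)
  · refine ((hf.locAbsCont z (hKD hz) T hT).absolutelyContinuousOnInterval hT.le).mono ?_
    rwa [uIcc_of_le hst, uIcc_of_le hT.le]
  · refine IntegrableOn.intervalIntegrable ?_
    rw [uIcc_of_le hst]
    exact IntegrableOn.mono_set ((hCd.integrable hd).const_mul _) hst_sub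

/-- Any solution of the Loewner PDE driven by a Herglotz vector field of order
`d` is itself of order `d`. -/
theorem loewner_solution_is_order_d
    (N : ℕ) (hN : 1 ≤ N) (D : Set (ℂN N)) (hD : IsDomainSet D)
    (hDbdd : Bornology.IsBounded D) (hDconv : Convex ℝ D)
    (d : ℝ≥0∞) (hd : 1 ≤ d) (G : ℂN N → ℝ → ℂN N)
    (hG : IsHerglotzVectorField G D d)
    (f : ℝ → ℂN N → ℂN N) (hf : IsLoewnerSolution f G D) :
    IsOrderD f D d :=
  loewner_solution_is_order_d_general N D hD d hd G hG f hf
end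
end

section
/- Let N ≥ 2, let U ⊆ ℂ^N be a domain, let F : U → ℂ^N be an injective holomorphic map which is a biholomorphism onto the open set V := F(U), and let (α_j) be a sequence of holomorphic automorphisms of ℂ^N such that the inverses α_j^{-1} converge to F uniformly on every compact subset of U. Then α_j converges to F^{-1} uniformly on every compact subset of V. -/
open MeasureTheory Set Metric Filter
open scoped ENNReal

noncomputable section

variable {N : ℕ}

/-
Fix a compact `K ⊆ V` and put `L = F⁻¹(K)`. Choose `r ≤ ε` with the closed `r`-thickening
`M` of `L` inside `U`; injectivity and compactness give `d > 0` with `|F z - F y| ≥ d` whenever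
`z ∈ L` and `|y - z| = r`. Once `|β_j - F| < d/2` on `M`, for `z ∈ L` the point `β_j z` lies
within `d/2` of `F z` while `β_j` maps the sphere `|y - z| = r` farther than `d/2` from `F z`,
so the segment from `β_j z` to `F z` cannot leave `β_j(B(z, r))`. Hence `F z = β_j y` with
`|y - z| < r`, i.e. `|α_j(F z) - F⁻¹(F z)| < r ≤ ε`.
-/

theorem Homeomorph.mem_image_ball_of_forall_mem_sphere
    {E G : Type*} [SeminormedAddCommGroup E] [NormedSpace ℝ E]
    [SeminormedAddCommGroup G] [NormedSpace ℝ G]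
    (e : E ≃ₜ G) {z : E} {w : G} {r : ℝ} (hr : 0 < r)
    (h : ∀ y ∈ sphere z r, dist (e z) w < dist (e y) w) : w ∈ e '' ball z r := by
  have hseg : segment ℝ (e z) w ⊆ e '' ball z r := by
    refine (convex_segment _ _).isPreconnected.subset_of_closure_inter_subset
      (e.isOpenMap _ isOpen_ball) ⟨e z, left_mem_segment _ _ _, z, mem_ball_self hr, rfl⟩ ?_
    rintro x ⟨hx, hxseg⟩
    rw [← e.image_closure, closure_ball z hr.ne'] at hx
    obtain ⟨y, hy, rfl⟩ := hx
    refine ⟨y, (mem_closedBall.1 hy).lt_of_ne fun hyr => ?_, rfl⟩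
    exact (h y hyr).not_ge (segment_subset_closedBall_right _ _ hxseg)
  exact hseg (right_mem_segment _ _ _)

theorem Homeomorph.mem_image_ball_of_dist_lt
    {E G : Type*} [SeminormedAddCommGroup E] [NormedSpace ℝ E]
    [SeminormedAddCommGroup G] [NormedSpace ℝ G]
    (e : E ≃ₜ G) (f : E → G) {z : E} {r d : ℝ} (hr : 0 < r)
    (hsep : ∀ y ∈ sphere z r, d ≤ dist (f z) (f y))
    (hclose : ∀ y ∈ closedBall z r, dist (f y) (e y) < d / 2) : f z ∈ e '' ball z r := by
  refine e.mem_image_ball_of_forall_mem_sphere hr fun y hy => ?_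
  rw [dist_comm (e z), dist_comm (e y)]
  linarith [hsep y hy, hclose z (mem_closedBall_self hr.le),
    hclose y (sphere_subset_closedBall hy), dist_triangle_right (f z) (f y) (e y)]

theorem IsCompact.exists_pos_le_dist_of_mem_sphere
    {X Y : Type*} [MetricSpace X] [ProperSpace X] [MetricSpace Y]
    {f : X → Y} {s L : Set X} {r : ℝ} (hL : IsCompact L) (hf : ContinuousOn f s)
    (hinj : InjOn f s) (hr : 0 < r) (hLs : cthickening r L ⊆ s) :
    ∃ d > 0, ∀ z ∈ L, ∀ y ∈ sphere z r, d ≤ dist (f z) (f y) := by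
  set A : Set (X × X) := {p | p.1 ∈ L ∧ p.2 ∈ sphere p.1 r}
  have hA_prod : A ⊆ L ×ˢ cthickening r L := fun p hp =>
    ⟨hp.1, mem_cthickening_of_dist_le _ _ _ _ hp.1 (le_of_eq hp.2)⟩
  have hA : IsCompact A :=
    (hL.prod hL.cthickening).of_isClosed_subset
      ((hL.isClosed.preimage continuous_fst).inter
        (isClosed_eq (continuous_snd.dist continuous_fst) continuous_const)) hA_prod
  have hA_mem : ∀ p ∈ A, p.1 ∈ s ∧ p.2 ∈ s := fun p hp =>
    ⟨hLs (self_subset_cthickening L hp.1), hLs (hA_prod hp).2⟩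
  have hcont : ContinuousOn (fun p : X × X => dist (f p.1) (f p.2)) A :=
    continuous_dist.comp_continuousOn <|
      (hf.comp continuousOn_fst fun p hp => (hA_mem p hp).1).prodMk
        (hf.comp continuousOn_snd fun p hp => (hA_mem p hp).2)
  obtain ⟨d, hd, hmin⟩ := hA.exists_forall_le' hcont (a := 0) fun p hp =>
    dist_pos.2 <| hinj.ne (hA_mem p hp).1 (hA_mem p hp).2 (ne_of_mem_sphere hp.2 hr.ne').symm
  exact ⟨d, hd, fun z hz y hy => hmin (z, y) ⟨hz, hy⟩⟩

theorem automorphism_inverses_converge_general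
    (N : ℕ) (U : Set (ℂN N)) (hU : IsDomainSet U)
    (F F' : ℂN N → ℂN N) (hF : DifferentiableOn ℂ F U) (hFinj : InjOn F U)
    (hF' : DifferentiableOn ℂ F' (F '' U))
    (hinv : ∀ z ∈ U, F' (F z) = z)
    (α β : ℕ → ℂN N → ℂN N)
    (hauto : ∀ j, Differentiable ℂ (α j) ∧ Differentiable ℂ (β j) ∧
      Function.LeftInverse (β j) (α j) ∧ Function.RightInverse (β j) (α j))
    (hconv : ∀ K : Set (ℂN N), K ⊆ U → IsCompact K →
      TendstoUniformlyOn (fun j => β j) F atTop K) :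
    ∀ K : Set (ℂN N), K ⊆ F '' U → IsCompact K →
      TendstoUniformlyOn (fun j => α j) F' atTop K := by
  intro K hKV hK
  have hFF' : ∀ w ∈ K, F (F' w) = w := fun w hw => by
    obtain ⟨u, hu, rfl⟩ := hKV hw
    rw [hinv u hu]
  set L := F' '' K
  have hLU : L ⊆ U := by
    rintro _ ⟨w, hw, rfl⟩
    obtain ⟨u, hu, rfl⟩ := hKV hw
    rwa [hinv u hu]
  have hL : IsCompact L := hK.image_of_continuousOn (hF'.continuousOn.mono hKV)
  rw [Metric.tendstoUniformlyOn_iff]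
  intro ε hε
  obtain ⟨δ, hδ, hδU⟩ := hL.exists_cthickening_subset_open hU.1 hLU
  have hr : 0 < min δ ε := lt_min hδ hε
  have hrU : cthickening (min δ ε) L ⊆ U := (cthickening_mono (min_le_left _ _) L).trans hδU
  obtain ⟨d, hd, hsep⟩ := hL.exists_pos_le_dist_of_mem_sphere hF.continuousOn hFinj hr hrU
  filter_upwards [Metric.tendstoUniformlyOn_iff.1 (hconv _ hrU hL.cthickening) (d / 2)
    (half_pos hd)] with j hj w hw
  obtain ⟨hα, hβ, hleft, hright⟩ := hauto j
  let e : ℂN N ≃ₜ ℂN N := ⟨⟨β j, α j, hright, hleft⟩, hβ.continuous, hα.continuous⟩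
  have hz : F' w ∈ L := mem_image_of_mem _ hw
  obtain ⟨y, hy, hyw⟩ := e.mem_image_ball_of_dist_lt F hr (hsep _ hz)
    fun y hy => hj y (closedBall_subset_cthickening hz _ hy)
  have hαw : α j w = y := by rw [← hFF' w hw, ← hyw]; exact hright y
  rw [hαw, dist_comm]
  exact (mem_ball.1 hy).trans_le (min_le_right _ _)

/-- If the inverses of a sequence of automorphisms of `ℂ^N` converge locally
uniformly on `U` to a biholomorphism `F : U → V`, then the automorphisms converge locally
uniformly on `V` to `F⁻¹`. -/
theorem automorphism_inverses_converge
    (N : ℕ) (hN : 2 ≤ N) (U : Set (ℂN N)) (hU : IsDomainSet U)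
    (F F' : ℂN N → ℂN N) (hF : DifferentiableOn ℂ F U) (hFinj : InjOn F U)
    (hV : IsOpen (F '' U)) (hF' : DifferentiableOn ℂ F' (F '' U))
    (hinv : ∀ z ∈ U, F' (F z) = z)
    (α β : ℕ → ℂN N → ℂN N)
    (hauto : ∀ j, Differentiable ℂ (α j) ∧ Differentiable ℂ (β j) ∧
      Function.LeftInverse (β j) (α j) ∧ Function.RightInverse (β j) (α j))
    (hconv : ∀ K : Set (ℂN N), K ⊆ U → IsCompact K →
      TendstoUniformlyOn (fun j => β j) F atTop K) :
    ∀ K : Set (ℂN N), K ⊆ F '' U → IsCompact K →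
      TendstoUniformlyOn (fun j => α j) F' atTop K :=
  automorphism_inverses_converge_general N U hU F F' hF hFinj hF' hinv α β hauto hconv
end
end

section
/- Let N ≥ 1, let D ⊆ ℂ^N be a bounded convex domain, and let (φ_{s,t})_{0≤s≤t} be an evolution family of order d ∈ [1,∞] on D. Then for all 0 ≤ s ≤ t the map φ_{s,t} : D → D is injective. -/
open MeasureTheory Set Metric Filter
open scoped ENNReal

noncomputable section

variable {N : ℕ}

/-!
Let `u₀` be the first time at which the trajectories of two distinct points `z, w` meet, at
`p = φ s u₀ z`. For `u < u₀` close to `u₀`, the points `x = φ s u z ≠ y = φ s u w` are close to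
`p`, and `φ u u₀` is uniformly close to the identity on a fixed ball around `p`, because the
`L^d` bound with `d ≥ 1` makes `∫_u^{u₀} c` small. By the Schwarz lemma a holomorphic map that is
close to the identity on a ball is injective on a smaller ball, contradicting
`φ u u₀ x = p = φ u u₀ y`.
-/

open Topology

theorem injOn_ball_of_norm_sub_self_le {E : Type*} [NormedAddCommGroup E] [NormedSpace ℂ E]
    {h : E → E} {p : E} {R ε : ℝ} (hd : DifferentiableOn ℂ h (ball p R))
    (hclose : ∀ q ∈ ball p R, ‖h q - q‖ ≤ ε) (hε : ε < R / 3) :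
    InjOn h (ball p (R / 3)) := by
  intro x hx y hy hxy
  have hR : 0 < R := by linarith [(nonempty_ball.1 ⟨x, hx⟩)]
  set g : E → E := fun q => h q - q
  have hsub : ball x (2 * R / 3) ⊆ ball p R := ball_subset_ball' (by linarith [mem_ball.1 hx])
  have hmaps : MapsTo g (ball x (2 * R / 3)) (closedBall (g x) (2 * ε)) := by
    intro q hq
    rw [mem_closedBall, dist_eq_norm]
    calc ‖g q - g x‖ ≤ ‖g q‖ + ‖g x‖ := norm_sub_le _ _
      _ ≤ 2 * ε := by linarith [hclose q (hsub hq), hclose x (hsub (mem_ball_self (by positivity)))]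
  have hyx : y ∈ ball x (2 * R / 3) := by
    rw [mem_ball]
    linarith [dist_triangle_right y x p, mem_ball.1 hx, mem_ball.1 hy]
  have hschwarz : dist (g y) (g x) ≤ 2 * ε / (2 * R / 3) * dist y x :=
    Complex.dist_le_div_mul_dist_of_mapsTo_ball ((hd.mono hsub).sub differentiableOn_id) hmaps hyx
  have hgyx : dist (g y) (g x) = dist y x := by
    simp only [g, dist_eq_norm, hxy]
    rw [← norm_neg]
    congr 1
    abel
  rw [hgyx] at hschwarz
  have hlt : 2 * ε / (2 * R / 3) < 1 := by
    rw [div_lt_one (by positivity)]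
    linarith
  have : dist y x ≤ 0 := by nlinarith [dist_nonneg (x := y) (y := x)]
  exact (dist_le_zero.1 this).symm

theorem continuousOn_of_norm_sub_le_sub {E : Type*} [NormedAddCommGroup E] {f : ℝ → E}
    {C : ℝ → ℝ} {S : Set ℝ} (hC : ContinuousOn C S)
    (hfC : ∀ u ∈ S, ∀ v ∈ S, u ≤ v → ‖f v - f u‖ ≤ C v - C u) : ContinuousOn f S := by
  intro u₀ hu₀
  have hbound : ∀ u ∈ S, ‖f u - f u₀‖ ≤ |C u - C u₀| := by
    intro u hu
    rcases le_total u₀ u with h | h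
    · exact (hfC u₀ hu₀ u hu h).trans (le_abs_self _)
    · rw [norm_sub_rev, abs_sub_comm]
      exact (hfC u hu u₀ hu₀ h).trans (le_abs_self _)
  have hC₀ : Tendsto (fun u => |C u - C u₀|) (𝓝[S] u₀) (𝓝 0) := by
    simpa using ((hC u₀ hu₀).tendsto.sub_const (C u₀)).abs
  exact tendsto_iff_norm_sub_tendsto_zero.2 <|
    squeeze_zero' (Eventually.of_forall fun _ => norm_nonneg _)
      (eventually_mem_nhdsWithin.mono hbound) hC₀

namespace IsEvolutionFamily

variable {φ : ℝ → ℝ → ℂN N → ℂN N} {D : Set (ℂN N)} {d : ℝ≥0∞}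

theorem exists_continuousOn_control (hφ : IsEvolutionFamily φ D d) (hd : 1 ≤ d) {T : ℝ}
    (hT : 0 < T) {K : Set (ℂN N)} (hKD : K ⊆ D) (hK : IsCompact K) :
    ∃ C : ℝ → ℝ, ContinuousOn C (Icc 0 T) ∧ ∀ z ∈ K, ∀ s u t : ℝ, 0 ≤ s → s ≤ u → u ≤ t →
      t ≤ T → ‖φ s t z - φ s u z‖ ≤ C t - C u := by
  obtain ⟨c, -, hcLp, hcbound⟩ := hφ.lp_bound T hT K hKD hK
  have hc : IntegrableOn c (Icc 0 T) := hcLp.integrable hd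
  have hc' : ∀ x ∈ Icc 0 T, IntervalIntegrable c volume 0 x := fun x hx =>
    (hc.mono_set (by rw [uIcc_of_le hx.1]; exact Icc_subset_Icc_right hx.2)).intervalIntegrable
  refine ⟨fun x => ∫ ξ in (0:ℝ)..x, c ξ, ?_, fun z hz s u t hs hsu hut htT => ?_⟩
  · simpa [uIcc_of_le hT.le] using
      intervalIntegral.continuousOn_primitive_interval (μ := volume) (a := 0) (b := T)
        (by rwa [uIcc_of_le hT.le])
  · rw [intervalIntegral.integral_interval_sub_left (hc' t ⟨by linarith, htT⟩)
      (hc' u ⟨by linarith, by linarith⟩)]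
    exact hcbound z hz s u t hs hsu hut htT

theorem continuousOn_Ici (hφ : IsEvolutionFamily φ D d) (hd : 1 ≤ d) {s : ℝ} (hs : 0 ≤ s)
    {z : ℂN N} (hz : z ∈ D) : ContinuousOn (fun u => φ s u z) (Ici s) := by
  intro u₀ hu₀
  obtain ⟨C, hC, hCφ⟩ := hφ.exists_continuousOn_control hd (T := u₀ + 1)
    (by linarith [mem_Ici.1 hu₀]) (singleton_subset_iff.2 hz) isCompact_singleton
  have hcont : ContinuousOn (fun u => φ s u z) (Icc s (u₀ + 1)) :=
    continuousOn_of_norm_sub_le_sub (hC.mono (Icc_subset_Icc_left hs))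
      fun u hu v hv huv => hCφ z rfl s u v hs hu.1 huv hv.2
  refine (hcont u₀ ⟨hu₀, by linarith⟩).mono_of_mem_nhdsWithin ?_
  rw [← Ici_inter_Iic]
  exact inter_mem_nhdsWithin _ (Iic_mem_nhds (by linarith))

theorem eventually_norm_sub_self_le (hφ : IsEvolutionFamily φ D d) (hd : 1 ≤ d)
    {K : Set (ℂN N)} (hKD : K ⊆ D) (hK : IsCompact K) {u₀ : ℝ} (hu₀ : 0 < u₀) {ε : ℝ}
    (hε : 0 < ε) : ∀ᶠ u in 𝓝[≤] u₀, ∀ q ∈ K, ‖φ u u₀ q - q‖ ≤ ε := by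
  obtain ⟨C, hC, hCφ⟩ := hφ.exists_continuousOn_control hd hu₀ hKD hK
  have hCu₀ : ∀ᶠ u in 𝓝[≤] u₀, C u₀ - C u < ε :=
    ((hC u₀ ⟨hu₀.le, le_rfl⟩).mono_of_mem_nhdsWithin (Icc_mem_nhdsLE hu₀)).eventually
      (Ioo_mem_nhds (by linarith) (by linarith) : Ioo (C u₀ - ε) (C u₀ + ε) ∈ 𝓝 (C u₀))
      |>.mono fun u hu => by linarith [hu.1]
  filter_upwards [hCu₀, Icc_mem_nhdsLE hu₀] with u hu ⟨hu0, huu₀⟩ q hq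
  calc ‖φ u u₀ q - q‖ = ‖φ u u₀ q - φ u u q‖ := by rw [hφ.id_eq u hu0 q (hKD hq)]
    _ ≤ C u₀ - C u := hCφ q hq u u u₀ hu0 le_rfl huu₀ le_rfl
    _ ≤ ε := hu.le

theorem eventually_apply_eq_of_apply_eq (hφ : IsEvolutionFamily φ D d) (hd : 1 ≤ d)
    (hD : IsOpen D) {s u₀ : ℝ} (hs : 0 ≤ s) (hsu₀ : s < u₀) {z w : ℂN N} (hz : z ∈ D)
    (hw : w ∈ D) (hmeet : φ s u₀ z = φ s u₀ w) : ∀ᶠ u in 𝓝[<] u₀, φ s u z = φ s u w := by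
  set p := φ s u₀ z
  obtain ⟨R, hR, hRD⟩ := nhds_basis_closedBall.mem_iff.1
    (hD.mem_nhds (hφ.mapsTo s u₀ hs hsu₀.le hz))
  have hnear : ∀ x ∈ D, φ s u₀ x = p → ∀ᶠ u in 𝓝[<] u₀, φ s u x ∈ ball p (R / 3) := by
    intro x hx hxp
    have hcont := (hφ.continuousOn_Ici hd hs hx u₀ hsu₀.le).mono_of_mem_nhdsWithin
      (mem_of_superset (Ioo_mem_nhdsLT hsu₀) (Ioo_subset_Icc_self.trans Icc_subset_Ici_self))
    rw [ContinuousWithinAt, hxp] at hcont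
    exact hcont.eventually (ball_mem_nhds p (by positivity))
  have hclose := (hφ.eventually_norm_sub_self_le hd hRD (isCompact_closedBall p R)
    (hs.trans_lt hsu₀) (ε := R / 4) (by positivity)).filter_mono
    (nhdsWithin_mono _ Iio_subset_Iic_self)
  filter_upwards [Ico_mem_nhdsLT hsu₀, hclose, hnear z hz rfl, hnear w hw hmeet.symm]
    with u ⟨hsu, huu₀⟩ hclose hz' hw'
  refine injOn_ball_of_norm_sub_self_le (h := φ u u₀)
    ((hφ.holomorphic u u₀ (hs.trans hsu) huu₀.le).mono (ball_subset_closedBall.trans hRD))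
    (fun q hq => hclose q (ball_subset_closedBall hq)) (by linarith) hz' hw' ?_
  rw [← hφ.comp s u u₀ hs hsu huu₀.le z hz, ← hφ.comp s u u₀ hs hsu huu₀.le w hw]
  exact hmeet

end IsEvolutionFamily

theorem evolution_family_injective_general
    (N : ℕ) (D : Set (ℂN N)) (hD : IsDomainSet D)
    (d : ℝ≥0∞) (hd : 1 ≤ d) (φ : ℝ → ℝ → ℂN N → ℂN N)
    (hφ : IsEvolutionFamily φ D d) :
    ∀ s t : ℝ, 0 ≤ s → s ≤ t → InjOn (φ s t) D := by
  intro s t hs hst z hz w hw hzw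
  set A := {u ∈ Icc s t | φ s u z = φ s u w}
  have hAbdd : BddBelow A := ⟨s, fun u hu => hu.1.1⟩
  have hAclosed : IsClosed A := isClosed_Icc.isClosed_eq
    ((hφ.continuousOn_Ici hd hs hz).mono Icc_subset_Ici_self)
    ((hφ.continuousOn_Ici hd hs hw).mono Icc_subset_Ici_self)
  obtain ⟨⟨hsu₀, hu₀t⟩, hmeet⟩ : sInf A ∈ A := hAclosed.csInf_mem ⟨t, ⟨hst, le_rfl⟩, hzw⟩ hAbdd
  obtain hsu₀ | hsu₀ := hsu₀.eq_or_lt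
  · rwa [← hsu₀, hφ.id_eq s hs z hz, hφ.id_eq s hs w hw] at hmeet
  obtain ⟨u, ⟨hsu, huu₀⟩, hmeet_u⟩ := ((eventually_mem_set.2 (Ico_mem_nhdsLT hsu₀)).and
    (hφ.eventually_apply_eq_of_apply_eq hd hD.1 hs hsu₀ hz hw hmeet)).exists
  exact absurd (csInf_le hAbdd ⟨⟨hsu, huu₀.le.trans hu₀t⟩, hmeet_u⟩) huu₀.not_ge

/-- The maps of an evolution family on a bounded convex domain are injective. -/
theorem evolution_family_injective
    (N : ℕ) (hN : 1 ≤ N) (D : Set (ℂN N)) (hD : IsDomainSet D)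
    (hDbdd : Bornology.IsBounded D) (hDconv : Convex ℝ D)
    (d : ℝ≥0∞) (hd : 1 ≤ d) (φ : ℝ → ℝ → ℂN N → ℂN N)
    (hφ : IsEvolutionFamily φ D d) :
    ∀ s t : ℝ, 0 ≤ s → s ≤ t → InjOn (φ s t) D :=
  evolution_family_injective_general N D hD d hd φ hφ
end
end
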